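/- Let (S_1,…,S_d) and (Ŝ_1,…,Ŝ_d) be two Cuntz families on H such that every S_i, S_i* commutes with every Ŝ_j, Ŝ_j*, and let N₀ be the von Neumann algebra generated by the set {Ŝ_{I'} Ŝ_{J'}* S_I S_J* : I, J, I', J' finite multi-indices with |I| = |J| and |I'| = |J'|}. Then the commutant N₀' is invariant under each of the maps Λ(X) = Σ_{k=1}^d S_k X S_k*, Λ̂(X) = Σ_{k=1}^d Ŝ_k X Ŝ_k*, X ↦ S_i* X S_i and X ↦ Ŝ_i* X Ŝ_i (for each 1 ≤ i ≤ d); and the centre N₀ ∩ N₀' is likewise invariant under each of these maps. -/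
import Mathlib


open ContinuousLinearMap Filter
open scoped ComplexInnerProductSpace ComplexOrder

noncomputable section

set_option linter.unusedSectionVars false

/-- The operator `S_I = S_{i₁} ⋯ S_{i_m}` associated to a finite multi-index
(the empty multi-index gives the identity). -/
def cword {d : ℕ} {H : Type*} [NormedAddCommGroup H] [InnerProductSpace ℂ H]
    (S : Fin d → H →L[ℂ] H) (I : List (Fin d)) : H →L[ℂ] H :=
  (I.map S).prod

/-- A Cuntz family: `Sᵢ* Sⱼ = δᵢⱼ 1` and `∑ₖ Sₖ Sₖ* = 1`. -/
def IsCuntzFamily {d : ℕ} {H : Type*} [NormedAddCommGroup H] [InnerProductSpace ℂ H]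
    [CompleteSpace H] (S : Fin d → H →L[ℂ] H) : Prop :=
  (∀ i j : Fin d, adjoint (S i) ∘L S j = if i = j then 1 else 0) ∧
    ∑ k : Fin d, S k ∘L adjoint (S k) = 1

/-- The canonical endomorphism `Λ(X) = ∑ₖ Sₖ X Sₖ*`. -/
def cLam {d : ℕ} {H : Type*} [NormedAddCommGroup H] [InnerProductSpace ℂ H] [CompleteSpace H]
    (S : Fin d → H →L[ℂ] H) (X : H →L[ℂ] H) : H →L[ℂ] H :=
  ∑ k : Fin d, S k ∘L X ∘L adjoint (S k)

section Aux

variable {d : ℕ} {H : Type*} [NormedAddCommGroup H] [InnerProductSpace ℂ H] [CompleteSpace H]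

lemma cword_nil (S : Fin d → H →L[ℂ] H) : cword S ([] : List (Fin d)) = 1 := rfl

lemma cword_cons (S : Fin d → H →L[ℂ] H) (a : Fin d) (I : List (Fin d)) :
    cword S (a :: I) = S a * cword S I := by
  simp [cword]

lemma adjoint_one' : adjoint (1 : H →L[ℂ] H) = 1 := by
  rw [one_def, adjoint_id]

lemma adjoint_mul (f g : H →L[ℂ] H) : adjoint (f * g) = adjoint g * adjoint f := by
  rw [mul_def, adjoint_comp, mul_def]

lemma adjoint_cword_cons (S : Fin d → H →L[ℂ] H) (a : Fin d) (I : List (Fin d)) :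
    adjoint (cword S (a :: I)) = adjoint (cword S I) * adjoint (S a) := by
  rw [cword_cons, adjoint_mul]

lemma commute_cword {a : H →L[ℂ] H} {T : Fin d → H →L[ℂ] H}
    (h : ∀ j, Commute a (T j)) (I : List (Fin d)) : Commute a (cword T I) := by
  induction I with
  | nil => rw [cword_nil]; exact Commute.one_right a
  | cons b J ih => rw [cword_cons]; exact (h b).mul_right ih

lemma commute_adjoint_cword {a : H →L[ℂ] H} {T : Fin d → H →L[ℂ] H}
    (h : ∀ j, Commute a (adjoint (T j))) (I : List (Fin d)) :
    Commute a (adjoint (cword T I)) := by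
  induction I with
  | nil => rw [cword_nil, adjoint_one']; exact Commute.one_right a
  | cons b J ih => rw [adjoint_cword_cons]; exact ih.mul_right (h b)

variable {S : Fin d → H →L[ℂ] H}

lemma cuntz_orth (hS : IsCuntzFamily S) (i j : Fin d) :
    adjoint (S i) * S j = if i = j then 1 else 0 := by
  rw [mul_def]; exact hS.1 i j

lemma cuntz_isom (hS : IsCuntzFamily S) (i : Fin d) : adjoint (S i) * S i = 1 := by
  rw [cuntz_orth hS, if_pos rfl]

lemma cLam_eq (X : H →L[ℂ] H) : cLam S X = ∑ k : Fin d, S k * X * adjoint (S k) := by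
  simp only [cLam, mul_def, comp_assoc]

/-- `Λ(X) Sₐ = Sₐ X`. -/
lemma lam_mul_s (hS : IsCuntzFamily S) (X : H →L[ℂ] H) (a : Fin d) :
    cLam S X * S a = S a * X := by
  rw [cLam_eq, Finset.sum_mul]
  have h : ∀ k : Fin d, S k * X * adjoint (S k) * S a
      = if k = a then S k * X else 0 := by
    intro k
    rw [mul_assoc, cuntz_orth hS]
    split <;> simp
  simp [h]

/-- `Sₐ* Λ(X) = X Sₐ*`. -/
lemma s_mul_lam (hS : IsCuntzFamily S) (X : H →L[ℂ] H) (a : Fin d) :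
    adjoint (S a) * cLam S X = X * adjoint (S a) := by
  rw [cLam_eq, Finset.mul_sum]
  have h : ∀ k : Fin d, adjoint (S a) * (S k * X * adjoint (S k))
      = if a = k then X * adjoint (S k) else 0 := by
    intro k
    rw [mul_assoc, ← mul_assoc (adjoint (S a)), cuntz_orth hS]
    split <;> simp [mul_assoc]
  simp [h]

/- Generic ring computations. -/

lemma ringR1 {A : Type*} [Ring A] (sa sb m lam X : A)
    (h1 : lam * sa = sa * X) (h2 : sb * lam = X * sb) (h3 : X * m = m * X) :
    (sa * m * sb) * lam = lam * (sa * m * sb) := by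
  calc (sa * m * sb) * lam = sa * m * (sb * lam) := by rw [mul_assoc]
    _ = sa * m * (X * sb) := by rw [h2]
    _ = sa * (m * X) * sb := by simp only [mul_assoc]
    _ = sa * (X * m) * sb := by rw [h3]
    _ = (sa * X) * (m * sb) := by simp only [mul_assoc]
    _ = (lam * sa) * (m * sb) := by rw [h1]
    _ = lam * (sa * m * sb) := by simp only [mul_assoc]

lemma ringR2 {A : Type*} [Ring A] (e s g g' X : A)
    (hes : e * s = 1) (hg' : g' = s * g * e) (hX : X * g' = g' * X) :
    (e * X * s) * g = g * (e * X * s) := by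
  have hsg : s * g = g' * s := by
    rw [hg', mul_assoc, mul_assoc, hes, mul_one]
  have heg : e * g' = g * e := by
    rw [hg', ← mul_assoc, ← mul_assoc, hes, one_mul]
  calc (e * X * s) * g = e * X * (s * g) := by rw [mul_assoc]
    _ = e * X * (g' * s) := by rw [hsg]
    _ = e * (X * g') * s := by simp only [mul_assoc]
    _ = e * (g' * X) * s := by rw [hX]
    _ = (e * g') * (X * s) := by simp only [mul_assoc]
    _ = (g * e) * (X * s) := by rw [heg]
    _ = g * (e * X * s) := by simp only [mul_assoc]

lemma ringR3 {A : Type*} [Ring A] (s e Y X c : A)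
    (hc1 : e * Y = c * e) (hc2 : Y * s = s * c) (hXc : X * c = c * X) :
    (s * X * e) * Y = Y * (s * X * e) := by
  calc (s * X * e) * Y = s * X * (e * Y) := by rw [mul_assoc]
    _ = s * X * (c * e) := by rw [hc1]
    _ = s * (X * c) * e := by simp only [mul_assoc]
    _ = s * (c * X) * e := by rw [hXc]
    _ = (s * c) * (X * e) := by simp only [mul_assoc]
    _ = (Y * s) * (X * e) := by rw [hc2]
    _ = Y * (s * X * e) := by simp only [mul_assoc]

lemma ringR4 {A : Type*} [Ring A] (s e Y : A) (hse : e * s = 1)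
    (hY : Y * (s * e) = (s * e) * Y) :
    Y * s = s * (e * Y * s) ∧ e * Y = (e * Y * s) * e := by
  constructor
  · calc Y * s = Y * s * (e * s) := by rw [hse, mul_one]
      _ = (Y * (s * e)) * s := by simp only [mul_assoc]
      _ = ((s * e) * Y) * s := by rw [hY]
      _ = s * (e * Y * s) := by simp only [mul_assoc]
  · calc e * Y = (e * s) * (e * Y) := by rw [hse, one_mul]
      _ = e * ((s * e) * Y) := by simp only [mul_assoc]
      _ = e * (Y * (s * e)) := by rw [hY]
      _ = (e * Y * s) * e := by simp only [mul_assoc]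

lemma ringR5 {A : Type*} [Ring A] (e X s Y lam : A)
    (hs : s * Y = lam * s) (he : e * lam = Y * e) (hX : X * lam = lam * X) :
    (e * X * s) * Y = Y * (e * X * s) := by
  calc (e * X * s) * Y = e * X * (s * Y) := by rw [mul_assoc]
    _ = e * X * (lam * s) := by rw [hs]
    _ = e * (X * lam) * s := by simp only [mul_assoc]
    _ = e * (lam * X) * s := by rw [hX]
    _ = (e * lam) * (X * s) := by simp only [mul_assoc]
    _ = (Y * e) * (X * s) := by rw [he]
    _ = Y * (e * X * s) := by simp only [mul_assoc]

lemma ringR7 {A : Type*} [Ring A] (si e t1 t2 c1 c2 : A)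
    (h1 : Commute si t1) (h2 : Commute si t2) :
    si * (t1 * (t2 * (c1 * c2))) * e = (t1 * t2) * ((si * c1) * (c2 * e)) := by
  simp only [mul_assoc]
  rw [h1.left_comm, h2.left_comm]

lemma ringR8 {A : Type*} [Ring A] (ti e t1 t2 c1 c2 : A)
    (h1 : Commute e c1) (h2 : Commute e c2) :
    ti * (t1 * (t2 * (c1 * c2))) * e = (ti * t1) * ((t2 * e) * (c1 * c2)) := by
  simp only [mul_assoc]
  rw [← h2.eq, h1.symm.left_comm]

end Aux

section Main

variable {d : ℕ} {H : Type*} [NormedAddCommGroup H] [InnerProductSpace ℂ H] [CompleteSpace H]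
variable (S T : Fin d → H →L[ℂ] H)

/-- The generating set. -/
def genSet : Set (H →L[ℂ] H) :=
  {x : H →L[ℂ] H | ∃ I J I' J' : List (Fin d), I.length = J.length ∧
      I'.length = J'.length ∧
      x = cword T I' ∘L adjoint (cword T J') ∘L cword S I ∘L adjoint (cword S J)}

variable {S T}

lemma mem_genSet {I J I' J' : List (Fin d)} (hIJ : I.length = J.length)
    (hIJ' : I'.length = J'.length) :
    cword T I' * adjoint (cword T J') * (cword S I * adjoint (cword S J)) ∈ genSet S T :=
  ⟨I, J, I', J', hIJ, hIJ', by simp only [mul_def, comp_assoc]⟩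

lemma sword_mem_genSet {I J : List (Fin d)} (hIJ : I.length = J.length) :
    cword S I * adjoint (cword S J) ∈ genSet S T := by
  have h := mem_genSet (S := S) (T := T) hIJ (I' := ([] : List (Fin d))) (J' := []) rfl
  simpa [cword_nil, adjoint_one'] using h

lemma tword_mem_genSet {I' J' : List (Fin d)} (hIJ' : I'.length = J'.length) :
    cword T I' * adjoint (cword T J') ∈ genSet S T := by
  have h := mem_genSet (S := S) (T := T) (I := ([] : List (Fin d))) (J := []) rfl hIJ'
  simpa [cword_nil, adjoint_one'] using h

lemma ss_mem_genSet (k l : Fin d) : S k * adjoint (S l) ∈ genSet S T := by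
  have h := sword_mem_genSet (S := S) (T := T) (I := [k]) (J := [l]) rfl
  simpa [cword] using h

lemma tt_mem_genSet (k l : Fin d) : T k * adjoint (T l) ∈ genSet S T := by
  have h := tword_mem_genSet (S := S) (T := T) (I' := [k]) (J' := [l]) rfl
  simpa [cword] using h

section comms

variable (hcomm : ∀ i j : Fin d,
      Commute (S i) (T j) ∧ Commute (S i) (adjoint (T j)) ∧
      Commute (adjoint (S i)) (T j) ∧ Commute (adjoint (S i)) (adjoint (T j)))
include hcomm

lemma s_comm_tword (i : Fin d) (I : List (Fin d)) : Commute (S i) (cword T I) :=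
  commute_cword (fun j => (hcomm i j).1) I

lemma s_comm_adj_tword (i : Fin d) (I : List (Fin d)) : Commute (S i) (adjoint (cword T I)) :=
  commute_adjoint_cword (fun j => (hcomm i j).2.1) I

lemma adj_s_comm_tword (i : Fin d) (I : List (Fin d)) : Commute (adjoint (S i)) (cword T I) :=
  commute_cword (fun j => (hcomm i j).2.2.1) I

lemma adj_s_comm_adj_tword (i : Fin d) (I : List (Fin d)) :
    Commute (adjoint (S i)) (adjoint (cword T I)) :=
  commute_adjoint_cword (fun j => (hcomm i j).2.2.2) I

lemma t_comm_sword (i : Fin d) (I : List (Fin d)) : Commute (T i) (cword S I) :=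
  commute_cword (fun j => ((hcomm j i).1).symm) I

lemma t_comm_adj_sword (i : Fin d) (I : List (Fin d)) : Commute (T i) (adjoint (cword S I)) :=
  commute_adjoint_cword (fun j => ((hcomm j i).2.2.1).symm) I

lemma adj_t_comm_sword (i : Fin d) (I : List (Fin d)) : Commute (adjoint (T i)) (cword S I) :=
  commute_cword (fun j => ((hcomm j i).2.1).symm) I

lemma adj_t_comm_adj_sword (i : Fin d) (I : List (Fin d)) :
    Commute (adjoint (T i)) (adjoint (cword S I)) :=
  commute_adjoint_cword (fun j => ((hcomm j i).2.2.2).symm) I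

end comms

/-- Any element of the generating set decomposes as `tword * sword`. -/
lemma gen_decomp {g : H →L[ℂ] H} (hg : g ∈ genSet S T) :
    ∃ I J I' J' : List (Fin d), I.length = J.length ∧ I'.length = J'.length ∧
      g = (cword T I' * adjoint (cword T J')) * (cword S I * adjoint (cword S J)) := by
  obtain ⟨I, J, I', J', h1, h2, h3⟩ := hg
  exact ⟨I, J, I', J', h1, h2, by rw [h3]; simp only [mul_def, comp_assoc]⟩

set_option maxHeartbeats 2000000 in
/-- Main lemma: the centralizer of the generating set is invariant under the four maps. -/
lemma lemmaA (hS : IsCuntzFamily S) (hT : IsCuntzFamily T)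
    (hcomm : ∀ i j : Fin d,
      Commute (S i) (T j) ∧ Commute (S i) (adjoint (T j)) ∧
      Commute (adjoint (S i)) (T j) ∧ Commute (adjoint (S i)) (adjoint (T j)))
    {X : H →L[ℂ] H} (hX : X ∈ Set.centralizer (genSet S T)) :
    cLam S X ∈ Set.centralizer (genSet S T) ∧
    cLam T X ∈ Set.centralizer (genSet S T) ∧
    (∀ i : Fin d, adjoint (S i) * X * S i ∈ Set.centralizer (genSet S T)) ∧
    (∀ i : Fin d, adjoint (T i) * X * T i ∈ Set.centralizer (genSet S T)) := by
  refine ⟨?_, ?_, ?_, ?_⟩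
  · -- Λ_S X ∈ centralizer
    intro g hg
    obtain ⟨I, J, I', J', hIJ, hIJ', rfl⟩ := gen_decomp hg
    have htwX : Commute (cword T I' * adjoint (cword T J')) X :=
      (hX _ (tword_mem_genSet hIJ'))
    have htwlam : Commute (cword T I' * adjoint (cword T J')) (cLam S X) := by
      rw [cLam_eq]
      refine Commute.sum_right _ _ _ fun k _ => ?_
      have h1 : Commute (cword T I' * adjoint (cword T J')) (S k) :=
        ((s_comm_tword hcomm k I').symm).mul_left ((s_comm_adj_tword hcomm k J').symm)
      have h2 : Commute (cword T I' * adjoint (cword T J')) (adjoint (S k)) :=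
        ((adj_s_comm_tword hcomm k I').symm).mul_left ((adj_s_comm_adj_tword hcomm k J').symm)
      exact (h1.mul_right htwX).mul_right h2
    have hswlam : Commute (cword S I * adjoint (cword S J)) (cLam S X) := by
      match I, J, hIJ with
      | [], [], _ => simpa [cword_nil, adjoint_one'] using Commute.one_left (cLam S X)
      | [], (b :: J₀), h => simp at h
      | (a :: I₀), [], h => simp at h
      | (a :: I₀), (b :: J₀), h =>
        have hIJ₀ : I₀.length = J₀.length := by simpa using h
        have hm : X * (cword S I₀ * adjoint (cword S J₀))
            = (cword S I₀ * adjoint (cword S J₀)) * X :=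
          (hX _ (sword_mem_genSet hIJ₀)).symm
        have key := ringR1 (S a) (adjoint (S b)) (cword S I₀ * adjoint (cword S J₀))
          (cLam S X) X (lam_mul_s hS X a) (s_mul_lam hS X b) hm
        have hrw : cword S (a :: I₀) * adjoint (cword S (b :: J₀))
            = S a * (cword S I₀ * adjoint (cword S J₀)) * adjoint (S b) := by
          rw [cword_cons, adjoint_cword_cons]; simp only [mul_assoc]
        rw [Commute, SemiconjBy, hrw]
        exact key
    exact (htwlam.mul_left hswlam).eq
  · -- Λ_T X ∈ centralizer
    intro g hg
    obtain ⟨I, J, I', J', hIJ, hIJ', rfl⟩ := gen_decomp hg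
    have hswX : Commute (cword S I * adjoint (cword S J)) X :=
      (hX _ (sword_mem_genSet hIJ))
    have hswlam : Commute (cword S I * adjoint (cword S J)) (cLam T X) := by
      rw [cLam_eq]
      refine Commute.sum_right _ _ _ fun k _ => ?_
      have h1 : Commute (cword S I * adjoint (cword S J)) (T k) :=
        ((t_comm_sword hcomm k I).symm).mul_left ((t_comm_adj_sword hcomm k J).symm)
      have h2 : Commute (cword S I * adjoint (cword S J)) (adjoint (T k)) :=
        ((adj_t_comm_sword hcomm k I).symm).mul_left ((adj_t_comm_adj_sword hcomm k J).symm)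
      exact (h1.mul_right hswX).mul_right h2
    have htwlam : Commute (cword T I' * adjoint (cword T J')) (cLam T X) := by
      match I', J', hIJ' with
      | [], [], _ => simpa [cword_nil, adjoint_one'] using Commute.one_left (cLam T X)
      | [], (b :: J₀), h => simp at h
      | (a :: I₀), [], h => simp at h
      | (a :: I₀), (b :: J₀), h =>
        have hIJ₀ : I₀.length = J₀.length := by simpa using h
        have hm : X * (cword T I₀ * adjoint (cword T J₀))
            = (cword T I₀ * adjoint (cword T J₀)) * X :=
          (hX _ (tword_mem_genSet hIJ₀)).symm
        have key := ringR1 (T a) (adjoint (T b)) (cword T I₀ * adjoint (cword T J₀))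
          (cLam T X) X (lam_mul_s hT X a) (s_mul_lam hT X b) hm
        have hrw : cword T (a :: I₀) * adjoint (cword T (b :: J₀))
            = T a * (cword T I₀ * adjoint (cword T J₀)) * adjoint (T b) := by
          rw [cword_cons, adjoint_cword_cons]; simp only [mul_assoc]
        rw [Commute, SemiconjBy, hrw]
        exact key
    exact (htwlam.mul_left hswlam).eq
  · -- compressions by S
    intro i g hg
    obtain ⟨I, J, I', J', hIJ, hIJ', rfl⟩ := gen_decomp hg
    have hmul : (cword T I' * adjoint (cword T J')) * (cword S I * adjoint (cword S J))
        = cword T I' * (adjoint (cword T J') * (cword S I * adjoint (cword S J))) := by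
      simp only [mul_assoc]
    have hg'eq : S i * ((cword T I' * adjoint (cword T J'))
          * (cword S I * adjoint (cword S J))) * adjoint (S i)
        = cword T I' * adjoint (cword T J')
          * (cword S (i :: I) * adjoint (cword S (i :: J))) := by
      rw [hmul, cword_cons, adjoint_cword_cons]
      have h7 := ringR7 (S i) (adjoint (S i)) (cword T I') (adjoint (cword T J'))
        (cword S I) (adjoint (cword S J)) (s_comm_tword hcomm i I')
        (s_comm_adj_tword hcomm i J')
      rw [h7]
    have hXg' : X * (S i * ((cword T I' * adjoint (cword T J'))
          * (cword S I * adjoint (cword S J))) * adjoint (S i))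
        = (S i * ((cword T I' * adjoint (cword T J'))
          * (cword S I * adjoint (cword S J))) * adjoint (S i)) * X := by
      rw [hg'eq]
      exact (hX _ (mem_genSet (I := i :: I) (J := i :: J) (I' := I') (J' := J') (by simpa using hIJ) hIJ')).symm
    exact (ringR2 (adjoint (S i)) (S i) _ _ X (cuntz_isom hS i) rfl hXg').symm
  · -- compressions by T
    intro i g hg
    obtain ⟨I, J, I', J', hIJ, hIJ', rfl⟩ := gen_decomp hg
    have hmul : (cword T I' * adjoint (cword T J')) * (cword S I * adjoint (cword S J))
        = cword T I' * (adjoint (cword T J') * (cword S I * adjoint (cword S J))) := by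
      simp only [mul_assoc]
    have hg'eq : T i * ((cword T I' * adjoint (cword T J'))
          * (cword S I * adjoint (cword S J))) * adjoint (T i)
        = cword T (i :: I') * adjoint (cword T (i :: J'))
          * (cword S I * adjoint (cword S J)) := by
      rw [hmul, cword_cons, adjoint_cword_cons]
      have h8 := ringR8 (T i) (adjoint (T i)) (cword T I') (adjoint (cword T J'))
        (cword S I) (adjoint (cword S J)) (adj_t_comm_sword hcomm i I)
        (adj_t_comm_adj_sword hcomm i J)
      rw [h8]
      simp only [mul_assoc]
    have hXg' : X * (T i * ((cword T I' * adjoint (cword T J'))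
          * (cword S I * adjoint (cword S J))) * adjoint (T i))
        = (T i * ((cword T I' * adjoint (cword T J'))
          * (cword S I * adjoint (cword S J))) * adjoint (T i)) * X := by
      rw [hg'eq]
      exact (hX _ (mem_genSet (I := I) (J := J) (I' := i :: I') (J' := i :: J') hIJ (by simpa using hIJ'))).symm
    exact (ringR2 (adjoint (T i)) (T i) _ _ X (cuntz_isom hT i) rfl hXg').symm

end Main

set_option maxHeartbeats 2000000 in
/-- Let `S`, `T` be commuting Cuntz families on `H` and let `N₀` be the
von Neumann algebra generated by `{T_{I'} T_{J'}* S_I S_J* : |I| = |J|, |I'| = |J'|}`.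
Then the commutant `N₀'` is invariant under `Λ`, `Λ̂`, `X ↦ Sᵢ* X Sᵢ` and `X ↦ Tᵢ* X Tᵢ`,
and so is the centre `N₀ ∩ N₀'`. -/
theorem uhf_commutant_and_centre_invariance {d : ℕ} (hd : 2 ≤ d)
    {H : Type*} [NormedAddCommGroup H] [InnerProductSpace ℂ H] [CompleteSpace H]
    (S T : Fin d → H →L[ℂ] H) (hS : IsCuntzFamily S) (hT : IsCuntzFamily T)
    (hcomm : ∀ i j : Fin d,
      Commute (S i) (T j) ∧ Commute (S i) (adjoint (T j)) ∧
      Commute (adjoint (S i)) (T j) ∧ Commute (adjoint (S i)) (adjoint (T j)))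
    (N₀ : Set (H →L[ℂ] H))
    (hN₀ : N₀ = Set.centralizer (Set.centralizer
        {x : H →L[ℂ] H | ∃ I J I' J' : List (Fin d), I.length = J.length ∧
          I'.length = J'.length ∧
          x = cword T I' ∘L adjoint (cword T J') ∘L cword S I ∘L adjoint (cword S J)})) :
    (∀ X ∈ Set.centralizer N₀,
      cLam S X ∈ Set.centralizer N₀ ∧ cLam T X ∈ Set.centralizer N₀ ∧
      (∀ i : Fin d, adjoint (S i) ∘L X ∘L S i ∈ Set.centralizer N₀) ∧
      (∀ i : Fin d, adjoint (T i) ∘L X ∘L T i ∈ Set.centralizer N₀)) ∧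
    (∀ X ∈ N₀ ∩ Set.centralizer N₀,
      cLam S X ∈ N₀ ∩ Set.centralizer N₀ ∧ cLam T X ∈ N₀ ∩ Set.centralizer N₀ ∧
      (∀ i : Fin d, adjoint (S i) ∘L X ∘L S i ∈ N₀ ∩ Set.centralizer N₀) ∧
      (∀ i : Fin d, adjoint (T i) ∘L X ∘L T i ∈ N₀ ∩ Set.centralizer N₀)) := by
  have hGset : {x : H →L[ℂ] H | ∃ I J I' J' : List (Fin d), I.length = J.length ∧
          I'.length = J'.length ∧
          x = cword T I' ∘L adjoint (cword T J') ∘L cword S I ∘L adjoint (cword S J)}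
      = genSet S T := rfl
  rw [hGset] at hN₀
  subst hN₀
  have hcc : Set.centralizer (Set.centralizer (Set.centralizer (genSet S T)))
      = Set.centralizer (genSet S T) := Set.centralizer_centralizer_centralizer (genSet S T)
  rw [hcc]
  have hcompS : ∀ (i : Fin d) (X : H →L[ℂ] H),
      adjoint (S i) ∘L X ∘L S i = adjoint (S i) * X * S i := by
    intro i X; simp only [mul_def, comp_assoc]
  have hcompT : ∀ (i : Fin d) (X : H →L[ℂ] H),
      adjoint (T i) ∘L X ∘L T i = adjoint (T i) * X * T i := by
    intro i X; simp only [mul_def, comp_assoc]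
  constructor
  · -- commutant invariance
    intro X hX
    obtain ⟨h1, h2, h3, h4⟩ := lemmaA hS hT hcomm hX
    exact ⟨h1, h2, fun i => (hcompS i X) ▸ h3 i, fun i => (hcompT i X) ▸ h4 i⟩
  · -- centre invariance
    rintro X ⟨hX2, hX1⟩
    obtain ⟨h1, h2, h3, h4⟩ := lemmaA hS hT hcomm hX1
    -- hX2 : X ∈ N₀ = (genSet)''
    have hLamS : cLam S X ∈ Set.centralizer (Set.centralizer (genSet S T)) := by
      intro Y hY
      obtain ⟨hY1, hY2, hY3, hY4⟩ := lemmaA hS hT hcomm hY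
      rw [cLam_eq, Finset.mul_sum, Finset.sum_mul]
      refine Finset.sum_congr rfl fun k _ => ?_
      have hc := ringR4 (S k) (adjoint (S k)) Y (cuntz_isom hS k)
        (hY _ (ss_mem_genSet k k)).symm
      have hXc : X * (adjoint (S k) * Y * S k) = (adjoint (S k) * Y * S k) * X :=
        (hX2 _ (hY3 k)).symm
      exact (ringR3 (S k) (adjoint (S k)) Y X _ hc.2 hc.1 hXc).symm
    have hLamT : cLam T X ∈ Set.centralizer (Set.centralizer (genSet S T)) := by
      intro Y hY
      obtain ⟨hY1, hY2, hY3, hY4⟩ := lemmaA hS hT hcomm hY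
      rw [cLam_eq, Finset.mul_sum, Finset.sum_mul]
      refine Finset.sum_congr rfl fun k _ => ?_
      have hc := ringR4 (T k) (adjoint (T k)) Y (cuntz_isom hT k)
        (hY _ (tt_mem_genSet k k)).symm
      have hXc : X * (adjoint (T k) * Y * T k) = (adjoint (T k) * Y * T k) * X :=
        (hX2 _ (hY4 k)).symm
      exact (ringR3 (T k) (adjoint (T k)) Y X _ hc.2 hc.1 hXc).symm
    have hCompS : ∀ i : Fin d,
        adjoint (S i) * X * S i ∈ Set.centralizer (Set.centralizer (genSet S T)) := by
      intro i Y hY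
      obtain ⟨hY1, _, _, _⟩ := lemmaA hS hT hcomm hY
      have hXc : X * cLam S Y = cLam S Y * X := (hX2 _ hY1).symm
      exact (ringR5 (adjoint (S i)) X (S i) Y (cLam S Y)
        (lam_mul_s hS Y i).symm (s_mul_lam hS Y i) hXc).symm
    have hCompT : ∀ i : Fin d,
        adjoint (T i) * X * T i ∈ Set.centralizer (Set.centralizer (genSet S T)) := by
      intro i Y hY
      obtain ⟨_, hY2, _, _⟩ := lemmaA hS hT hcomm hY
      have hXc : X * cLam T Y = cLam T Y * X := (hX2 _ hY2).symm
      exact (ringR5 (adjoint (T i)) X (T i) Y (cLam T Y)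
        (lam_mul_s hT Y i).symm (s_mul_lam hT Y i) hXc).symm
    exact ⟨⟨hLamS, h1⟩, ⟨hLamT, h2⟩,
      fun i => (hcompS i X) ▸ ⟨hCompS i, h3 i⟩,
      fun i => (hcompT i X) ▸ ⟨hCompT i, h4 i⟩⟩
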